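/- arXiv:2602.00714 — 3 statements merged into one kernel-verified Lean document; each statement's English description precedes it below -/
import Mathlib

section
/- Suppose β_h, β_m, A, H, μ_h, μ_m, ρ_h, τ_b > 0 and define R₀ = sqrt(β_h β_m A H e^{−μ_h τ_b} / (μ_h μ_m ρ_h)). If R₀ > 1, then there exists a unique triple (u₁*, u₂*, u₃*) of positive reals satisfying the steady-state equations β_m (A − u₁*) u₃* = μ_m u₁*, H = β_h u₁* u₂* + μ_h u₂*, and β_h e^{−μ_h τ_b} u₁* u₂* = ρ_h u₃*, with u₁* < A. -/
/-!
Write `c = e^{-μ_h τ_b}`. For `u₁ ≠ 0` the second and third equations determine `u₂` and `u₃`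
from `u₁`, and substituting them into the first equation and cancelling `u₁` leaves the linear
equation `β_m β_h c H (A - u₁) = μ_m ρ_h (β_h u₁ + μ_h)`. Its unique root lies in `(0, A)`
exactly when `μ_h μ_m ρ_h < β_h β_m A H c`, i.e. when `R₀ > 1`.
-/

section SteadyState

variable {βh βm A H μh μm ρh c : ℝ}

noncomputable def steadyU₁ (βh βm A H μh μm ρh c : ℝ) : ℝ :=
  (βm * βh * c * H * A - μm * ρh * μh) / (βm * βh * c * H + μm * ρh * βh)

lemma steady_equations_iff {x y z : ℝ} (hx : x ≠ 0) (hd : βh * x + μh ≠ 0) (hρh : ρh ≠ 0) :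
    (βm * (A - x) * z = μm * x ∧ H = βh * x * y + μh * y ∧ βh * c * x * y = ρh * z) ↔
      (βm * βh * c * H * (A - x) = μm * ρh * (βh * x + μh) ∧
        y = H / (βh * x + μh) ∧ z = βh * c * x * y / ρh) := by
  rw [eq_div_iff hd, eq_div_iff hρh]
  constructor
  · rintro ⟨h₁, h₂, h₃⟩
    refine ⟨mul_left_cancel₀ hx ?_, by linear_combination -h₂, by linear_combination -h₃⟩
    linear_combination (βm * βh * c * x * (A - x)) * h₂ +
      (βm * (A - x) * (βh * x + μh)) * h₃ + (ρh * (βh * x + μh)) * h₁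
  · rintro ⟨h, hy, hz⟩
    refine ⟨mul_left_cancel₀ (mul_ne_zero hρh hd) ?_, by linear_combination -hy,
      by linear_combination -hz⟩
    linear_combination x * h + (βm * (A - x) * (βh * x + μh)) * hz + (βm * βh * c * x * (A - x)) * hy

lemma steady_linear_iff {x : ℝ} (hden : βm * βh * c * H + μm * ρh * βh ≠ 0) :
    βm * βh * c * H * (A - x) = μm * ρh * (βh * x + μh) ↔
      x = steadyU₁ βh βm A H μh μm ρh c := by
  rw [steadyU₁, eq_div_iff hden]
  constructor <;> intro h <;> linear_combination -h

variable (hβh : 0 < βh) (hβm : 0 < βm) (hH : 0 < H) (hμm : 0 < μm) (hρh : 0 < ρh) (hc : 0 < c)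
include hβh hβm hH hμm hρh hc

lemma steadyU₁_pos (hR : μh * μm * ρh < βh * βm * A * H * c) :
    0 < steadyU₁ βh βm A H μh μm ρh c :=
  div_pos (by linarith) (by positivity)

lemma steadyU₁_lt (hA : 0 < A) (hμh : 0 < μh) : steadyU₁ βh βm A H μh μm ρh c < A := by
  rw [steadyU₁, div_lt_iff₀ (by positivity)]
  nlinarith [mul_pos (mul_pos hμm hρh) hμh, mul_pos (mul_pos (mul_pos hA hμm) hρh) hβh]

end SteadyState

theorem steady_state_exists_unique_general
    (βh βm A H μh μm ρh τb : ℝ)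
    (hβh : 0 < βh) (hβm : 0 < βm) (hA : 0 < A) (hH : 0 < H)
    (hμh : 0 < μh) (hμm : 0 < μm) (hρh : 0 < ρh)
    (hR0 : 1 < Real.sqrt (βh * βm * A * H * Real.exp (-μh * τb) / (μh * μm * ρh))) :
    ∃! u : ℝ × ℝ × ℝ,
      0 < u.1 ∧ 0 < u.2.1 ∧ 0 < u.2.2 ∧ u.1 < A ∧
      βm * (A - u.1) * u.2.2 = μm * u.1 ∧
      H = βh * u.1 * u.2.1 + μh * u.2.1 ∧
      βh * Real.exp (-μh * τb) * u.1 * u.2.1 = ρh * u.2.2 := by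
  set c := Real.exp (-μh * τb)
  have hc : 0 < c := Real.exp_pos _
  have hR : μh * μm * ρh < βh * βm * A * H * c := by
    rw [← one_lt_div (by positivity)]
    simpa using (Real.lt_sqrt zero_le_one).1 hR0
  set x := steadyU₁ βh βm A H μh μm ρh c
  have hx : 0 < x := steadyU₁_pos hβh hβm hH hμm hρh hc hR
  have hxA : x < A := steadyU₁_lt hβh hβm hH hμm hρh hc hA hμh
  have hden : βm * βh * c * H + μm * ρh * βh ≠ 0 := by positivity
  refine (existsUnique_congr fun u => ?_).2
    (existsUnique_eq (a' := (x, H / (βh * x + μh), βh * c * x * (H / (βh * x + μh)) / ρh)))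
  obtain ⟨u₁, u₂, u₃⟩ := u
  simp only [Prod.mk.injEq]
  constructor
  · rintro ⟨hu₁, -, -, -, heq⟩
    obtain ⟨hlin, hu₂, hu₃⟩ := (steady_equations_iff hu₁.ne' (by positivity) hρh.ne').1 heq
    obtain rfl := (steady_linear_iff hden).1 hlin
    exact ⟨rfl, hu₂, hu₂ ▸ hu₃⟩
  · rintro ⟨rfl, rfl, rfl⟩
    refine ⟨hx, by positivity, by positivity, hxA,
      (steady_equations_iff hx.ne' (by positivity) hρh.ne').2 ⟨?_, rfl, rfl⟩⟩
    exact (steady_linear_iff hden).2 rfl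

theorem steady_state_exists_unique
    (βh βm A H μh μm ρh τb : ℝ)
    (hβh : 0 < βh) (hβm : 0 < βm) (hA : 0 < A) (hH : 0 < H)
    (hμh : 0 < μh) (hμm : 0 < μm) (hρh : 0 < ρh) (hτb : 0 < τb)
    (hR0 : 1 < Real.sqrt (βh * βm * A * H * Real.exp (-μh * τb) / (μh * μm * ρh))) :
    ∃! u : ℝ × ℝ × ℝ,
      0 < u.1 ∧ 0 < u.2.1 ∧ 0 < u.2.2 ∧ u.1 < A ∧
      βm * (A - u.1) * u.2.2 = μm * u.1 ∧
      H = βh * u.1 * u.2.1 + μh * u.2.1 ∧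
      βh * Real.exp (-μh * τb) * u.1 * u.2.1 = ρh * u.2.2 :=
  steady_state_exists_unique_general βh βm A H μh μm ρh τb hβh hβm hA hH hμh hμm hρh hR0
end

section
/- Suppose β_h, β_m, A, H, μ_h, μ_m, ρ_h, τ_b > 0 and define R₀ = sqrt(β_h β_m A H e^{−μ_h τ_b} / (μ_h μ_m ρ_h)). If R₀ ≤ 1, then there is no triple (u₁*, u₂*, u₃*) of strictly positive reals with u₁* < A satisfying β_m (A − u₁*) u₃* = μ_m u₁*, H = β_h u₁* u₂* + μ_h u₂*, and β_h e^{−μ_h τ_b} u₁* u₂* = ρ_h u₃*. -/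
/-!
Writing `E = exp (-μh τb)`, eliminating `u₃` and then `u₂` from the steady-state equations leaves
`βm βh E H (A - u₁) = μm ρh (βh u₁ + μh)`. For `u₁ > 0` the left side is at most `βh βm A H E`,
which `R₀ ≤ 1` bounds by `μh μm ρh`, while the right side is strictly larger than `μh μm ρh`.
-/

theorem steadyState_balance {βh βm A H μh μm ρh E u₁ u₂ u₃ : ℝ} (hu₁ : u₁ ≠ 0)
    (hvector : βm * (A - u₁) * u₃ = μm * u₁) (hhost : H = βh * u₁ * u₂ + μh * u₂)
    (hinfection : βh * E * u₁ * u₂ = ρh * u₃) :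
    βm * βh * E * (A - u₁) * H = μm * ρh * (βh * u₁ + μh) := by
  have hcancel : βm * βh * E * (A - u₁) * u₂ * u₁ = μm * ρh * u₁ := by
    linear_combination ρh * hvector + βm * (A - u₁) * hinfection
  rw [hhost, ← mul_right_cancel₀ hu₁ hcancel]
  ring

theorem no_positive_steady_state_of_R0_le_one_general
    (βh βm A H μh μm ρh τb : ℝ)
    (hβh : 0 < βh) (hβm : 0 < βm) (hH : 0 < H)
    (hμh : 0 < μh) (hμm : 0 < μm) (hρh : 0 < ρh)
    (hR0 : Real.sqrt (βh * βm * A * H * Real.exp (-μh * τb) / (μh * μm * ρh)) ≤ 1) :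
    ¬ ∃ u₁ u₂ u₃ : ℝ,
      0 < u₁ ∧ 0 < u₂ ∧ 0 < u₃ ∧ u₁ < A ∧
      βm * (A - u₁) * u₃ = μm * u₁ ∧
      H = βh * u₁ * u₂ + μh * u₂ ∧
      βh * Real.exp (-μh * τb) * u₁ * u₂ = ρh * u₃ := by
  rintro ⟨u₁, u₂, u₃, hu₁, -, -, -, hvector, hhost, hinfection⟩
  have hthreshold : βh * βm * A * H * Real.exp (-μh * τb) ≤ μh * μm * ρh := by
    rwa [Real.sqrt_le_one, div_le_one (by positivity)] at hR0
  have hbalance := steadyState_balance hu₁.ne' hvector hhost hinfection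
  have hloss : 0 ≤ βm * βh * Real.exp (-μh * τb) * H * u₁ := by positivity
  have hgain : 0 < μm * ρh * βh * u₁ := by positivity
  linarith

theorem no_positive_steady_state_of_R0_le_one
    (βh βm A H μh μm ρh τb : ℝ)
    (hβh : 0 < βh) (hβm : 0 < βm) (hA : 0 < A) (hH : 0 < H)
    (hμh : 0 < μh) (hμm : 0 < μm) (hρh : 0 < ρh) (hτb : 0 < τb)
    (hR0 : Real.sqrt (βh * βm * A * H * Real.exp (-μh * τb) / (μh * μm * ρh)) ≤ 1) :
    ¬ ∃ u₁ u₂ u₃ : ℝ,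
      0 < u₁ ∧ 0 < u₂ ∧ 0 < u₃ ∧ u₁ < A ∧
      βm * (A - u₁) * u₃ = μm * u₁ ∧
      H = βh * u₁ * u₂ + μh * u₂ ∧
      βh * Real.exp (-μh * τb) * u₁ * u₂ = ρh * u₃ :=
  no_positive_steady_state_of_R0_le_one_general βh βm A H μh μm ρh τb hβh hβm hH hμh hμm hρh hR0
end

section
/- Let μ_h, τ_b > 0 and suppose R₀² = β_h β_m A H e^{−μ_h τ_b}/(μ_h μ_m ρ_h) > 1. Then the unique positive steady state components satisfy u₁* = (μ_h μ_m ρ_h (R₀² − 1))/(β_m β_h H e^{−μ_h τ_b} + β_h μ_m ρ_h), u₂* = H/(β_h u₁* + μ_h), and u₃* = β_h e^{−μ_h τ_b} u₁* u₂*/ρ_h, i.e., these explicit formulas solve the three steady-state equations. -/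
/-! Eliminating u₂ = H / (βh u₁ + μh) and u₃ = βh E u₁ u₂ / ρh (with E = e^{−μh τb}) turns the
mosquito balance βm (A − u₁) u₃ = μm u₁ into the linear equation
u₁ (βm βh H E + βh μm ρh) = βh βm A H E − μh μm ρh, whose solution is the stated u₁; it is
positive exactly because R₀² > 1. -/

namespace SteadyState

variable {βh βm A H μh μm ρh E x : ℝ}

lemma mul_div_sub_one_div_mul_eq {K c D : ℝ} (hc : c ≠ 0) (hD : D ≠ 0) :
    c * (K / c - 1) / D * D = K - c := by
  field_simp

lemma mosquito_balance_of_linear (hx : βh * x + μh ≠ 0) (hρh : ρh ≠ 0)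
    (hlin : x * (βm * βh * H * E + βh * μm * ρh) = βh * βm * A * H * E - μh * μm * ρh) :
    βm * (A - x) * (βh * E * x * (H / (βh * x + μh)) / ρh) = μm * x := by
  have hx' : x * βh + μh ≠ 0 := by rwa [mul_comm]
  field_simp
  linear_combination (-x) * hlin

lemma human_balance (hx : βh * x + μh ≠ 0) :
    H = βh * x * (H / (βh * x + μh)) + μh * (H / (βh * x + μh)) := by
  rw [← add_mul, mul_div_cancel₀ H hx]

end SteadyState

theorem explicit_steady_state_formulas_general
    (βh βm A H μh μm ρh τb : ℝ)
    (hβh : 0 < βh) (hβm : 0 < βm) (hH : 0 < H)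
    (hμh : 0 < μh) (hμm : 0 < μm) (hρh : 0 < ρh)
    (hR0 : 1 < βh * βm * A * H * Real.exp (-μh * τb) / (μh * μm * ρh)) :
    let R0sq := βh * βm * A * H * Real.exp (-μh * τb) / (μh * μm * ρh)
    let u₁ := μh * μm * ρh * (R0sq - 1) /
      (βm * βh * H * Real.exp (-μh * τb) + βh * μm * ρh)
    let u₂ := H / (βh * u₁ + μh)
    let u₃ := βh * Real.exp (-μh * τb) * u₁ * u₂ / ρh
    0 < u₁ ∧ 0 < u₂ ∧ 0 < u₃ ∧
    βm * (A - u₁) * u₃ = μm * u₁ ∧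
    H = βh * u₁ * u₂ + μh * u₂ ∧
    βh * Real.exp (-μh * τb) * u₁ * u₂ = ρh * u₃ := by
  intro R0sq u₁ u₂ u₃
  have hD : 0 < βm * βh * H * Real.exp (-μh * τb) + βh * μm * ρh := by positivity
  have hu₁ : 0 < u₁ := div_pos (mul_pos (by positivity) (sub_pos.2 hR0)) hD
  have hden : 0 < βh * u₁ + μh := by positivity
  have hu₂ : 0 < u₂ := div_pos hH hden
  have hu₃ : 0 < u₃ := div_pos (by positivity) hρh
  have hlin := SteadyState.mul_div_sub_one_div_mul_eq
    (K := βh * βm * A * H * Real.exp (-μh * τb)) (by positivity : μh * μm * ρh ≠ 0) hD.ne'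
  exact ⟨hu₁, hu₂, hu₃, SteadyState.mosquito_balance_of_linear hden.ne' hρh.ne' hlin,
    SteadyState.human_balance hden.ne', (mul_div_cancel₀ _ hρh.ne').symm⟩

theorem explicit_steady_state_formulas
    (βh βm A H μh μm ρh τb : ℝ)
    (hβh : 0 < βh) (hβm : 0 < βm) (hA : 0 < A) (hH : 0 < H)
    (hμh : 0 < μh) (hμm : 0 < μm) (hρh : 0 < ρh) (hτb : 0 < τb)
    (hR0 : 1 < βh * βm * A * H * Real.exp (-μh * τb) / (μh * μm * ρh)) :
    let R0sq := βh * βm * A * H * Real.exp (-μh * τb) / (μh * μm * ρh)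
    let u₁ := μh * μm * ρh * (R0sq - 1) /
      (βm * βh * H * Real.exp (-μh * τb) + βh * μm * ρh)
    let u₂ := H / (βh * u₁ + μh)
    let u₃ := βh * Real.exp (-μh * τb) * u₁ * u₂ / ρh
    0 < u₁ ∧ 0 < u₂ ∧ 0 < u₃ ∧
    βm * (A - u₁) * u₃ = μm * u₁ ∧
    H = βh * u₁ * u₂ + μh * u₂ ∧
    βh * Real.exp (-μh * τb) * u₁ * u₂ = ρh * u₃ :=
  explicit_steady_state_formulas_general βh βm A H μh μm ρh τb hβh hβm hH hμh hμm hρh hR0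
end
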